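/- For integers t ≥ 2, k ≥ 1, and nonnegative integers k_1,…,k_{r-1} with ∑_j k_j = k: the ratio multinomial(k; k_1,…,k_{r-1})^2 / multinomial(kt; k_1t,…,k_{r-1}t) is at most 1. -/

import Mathlib

/-!
Multinomial coefficients are supermultiplicative, `M(a) M(b) ≤ M(a + b)`: peeling off one part at a
time writes each side as a product of binomial coefficients, and `C(m, i) C(n, j) ≤ C(m + n, i + j)`
is one term of Vandermonde's identity. Since `M(b) ≥ 1` this also makes `M` monotone, so
`M(k⃗)² ≤ M(2k⃗) ≤ M(tk⃗)` for `t ≥ 2`.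
-/

namespace Nat

theorem choose_mul_choose_le_add_choose (m n i j : ℕ) :
    m.choose i * n.choose j ≤ (m + n).choose (i + j) := by
  rw [add_choose_eq]
  exact Finset.single_le_sum (f := fun p : ℕ × ℕ => m.choose p.1 * n.choose p.2)
    (fun _ _ => Nat.zero_le _) (a := (i, j)) (Finset.HasAntidiagonal.mem_antidiagonal.mpr rfl)

variable {α : Type*} (s : Finset α)

theorem multinomial_mul_multinomial_le_multinomial_add (a b : α → ℕ) :
    multinomial s a * multinomial s b ≤ multinomial s (a + b) := by
  induction s using Finset.cons_induction with
  | empty => simp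
  | cons x s hx ih =>
    simp only [multinomial_cons, Pi.add_apply, Finset.sum_add_distrib]
    calc (a x + ∑ i ∈ s, a i).choose (a x) * multinomial s a *
          ((b x + ∑ i ∈ s, b i).choose (b x) * multinomial s b)
        = (a x + ∑ i ∈ s, a i).choose (a x) * (b x + ∑ i ∈ s, b i).choose (b x) *
          (multinomial s a * multinomial s b) := by ring
      _ ≤ (a x + ∑ i ∈ s, a i + (b x + ∑ i ∈ s, b i)).choose (a x + b x) *
          multinomial s (a + b) :=
        Nat.mul_le_mul (choose_mul_choose_le_add_choose _ _ _ _) ih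
      _ = (a x + b x + (∑ i ∈ s, a i + ∑ i ∈ s, b i)).choose (a x + b x) *
          multinomial s (a + b) := by ring_nf

theorem multinomial_le_multinomial_add (a b : α → ℕ) :
    multinomial s a ≤ multinomial s (a + b) :=
  calc multinomial s a ≤ multinomial s a * multinomial s b :=
        Nat.le_mul_of_pos_right _ (multinomial_pos s b)
    _ ≤ multinomial s (a + b) := multinomial_mul_multinomial_le_multinomial_add s a b

theorem multinomial_sq_le_multinomial_mul (f : α → ℕ) {t : ℕ} (ht : 2 ≤ t) :
    multinomial s f ^ 2 ≤ multinomial s (fun j => f j * t) := by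
  obtain ⟨u, rfl⟩ := Nat.exists_eq_add_of_le ht
  calc multinomial s f ^ 2 = multinomial s f * multinomial s f := sq _
    _ ≤ multinomial s (f + f) := multinomial_mul_multinomial_le_multinomial_add s f f
    _ ≤ multinomial s (f + f + fun j => f j * u) := multinomial_le_multinomial_add s _ _
    _ = multinomial s (fun j => f j * (2 + u)) := by
      congr 1; ext j; simp only [Pi.add_apply]; ring

end Nat

theorem multinomial_sq_ratio_le_one_general (r t : ℕ) (ht : 2 ≤ t)
    (kv : Fin (r - 1) → ℕ) :
    (Nat.multinomial Finset.univ kv : ℝ) ^ 2 /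
        (Nat.multinomial Finset.univ (fun j => kv j * t) : ℝ) ≤ 1 := by
  rw [div_le_one (by exact_mod_cast Nat.multinomial_pos _ _)]
  exact_mod_cast Nat.multinomial_sq_le_multinomial_mul Finset.univ kv ht

/-- For `t ≥ 2`, `k ≥ 1` and nonnegative integers `k_1, …, k_{r-1}` with `∑_j k_j = k`,
`multinomial(k; k⃗)² / multinomial(kt; t·k⃗) ≤ 1`. -/
theorem multinomial_sq_ratio_le_one (r t k : ℕ) (hr : 2 ≤ r) (ht : 2 ≤ t) (hk : 1 ≤ k)
    (kv : Fin (r - 1) → ℕ) (hkv : ∑ j, kv j = k) :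
    (Nat.multinomial Finset.univ kv : ℝ) ^ 2 /
        (Nat.multinomial Finset.univ (fun j => kv j * t) : ℝ) ≤ 1 :=
  multinomial_sq_ratio_le_one_general r t ht kv
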